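/- Let n be a positive integer and let H ⊆ ℝ be any set of parameters with 1 ∈ H and −1 ∈ H. Then DD_n ⊆ cone(⋃_{α ∈ H} B̄(α)) ⊆ SDD_n: the conical hull of the expanded SD bases over H contains the set of diagonally dominant symmetric matrices and is contained in the set of scaled diagonally dominant symmetric matrices. -/
import Mathlib


open Matrix Finset

noncomputable section

/-- `e i` is the standard basis vector with a `1` in coordinate `i`. -/
def e {n : ℕ} (i : Fin n) : Fin n → ℝ := Pi.single i 1

/-- The positive semidefinite cone `S^n_+`. -/
def PSDcone (n : ℕ) : Set (Matrix (Fin n) (Fin n) ℝ) :=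
  {X | X.IsSymm ∧ ∀ d : Fin n → ℝ, 0 ≤ d ⬝ᵥ X.mulVec d}

/-- The set of diagonally dominant symmetric matrices `DD_n`. -/
def DD (n : ℕ) : Set (Matrix (Fin n) (Fin n) ℝ) :=
  {A | A.IsSymm ∧ ∀ i, ∑ j ∈ Finset.univ.erase i, |A i j| ≤ A i i}

/-- The set of scaled diagonally dominant symmetric matrices `SDD_n`. -/
def SDD (n : ℕ) : Set (Matrix (Fin n) (Fin n) ℝ) :=
  {A | A.IsSymm ∧ ∃ D : Fin n → ℝ, (∀ i, 0 < D i) ∧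
    Matrix.diagonal D * A * Matrix.diagonal D ∈ DD n}

/-- The conical hull of a set of matrices. -/
def coneHull {n : ℕ} (K : Set (Matrix (Fin n) (Fin n) ℝ)) :
    Set (Matrix (Fin n) (Fin n) ℝ) :=
  {X | ∃ (k : ℕ) (c : Fin k → ℝ) (M : Fin k → Matrix (Fin n) (Fin n) ℝ),
    (∀ i, 0 ≤ c i) ∧ (∀ i, M i ∈ K) ∧ X = ∑ i, c i • M i}

/-- The dual cone within `S^n` w.r.t. the trace inner product. -/
def dualCone {n : ℕ} (K : Set (Matrix (Fin n) (Fin n) ℝ)) :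
    Set (Matrix (Fin n) (Fin n) ℝ) :=
  {A | A.IsSymm ∧ ∀ B ∈ K, 0 ≤ Matrix.trace (Aᵀ * B)}

/-- The SD basis of Type I, as a set. -/
def Bplus (n : ℕ) : Set (Matrix (Fin n) (Fin n) ℝ) :=
  {M | ∃ i j : Fin n, i ≤ j ∧ M = vecMulVec (e i + e j) (e i + e j)}

/-- The SD basis of Type II, as a set. -/
def Bminus (n : ℕ) : Set (Matrix (Fin n) (Fin n) ℝ) :=
  {M | ∃ i : Fin n, M = vecMulVec (e i + e i) (e i + e i)} ∪
    {M | ∃ i j : Fin n, i < j ∧ M = vecMulVec (e i - e j) (e i - e j)}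

/-- The expanded SD basis matrix `B̄_{i,j}(α) = (e_i + α e_j)(e_i + α e_j)ᵀ`. -/
def Bbar {n : ℕ} (α : ℝ) (i j : Fin n) : Matrix (Fin n) (Fin n) ℝ :=
  vecMulVec (e i + α • e j) (e i + α • e j)

/-- The expanded SD basis `B̄(α)`, as a set. -/
def BbarSet (n : ℕ) (α : ℝ) : Set (Matrix (Fin n) (Fin n) ℝ) :=
  {M | ∃ i j : Fin n, i ≤ j ∧ M = Bbar α i j}

/-- The space `S^n` of symmetric matrices as a submodule. -/
def symmSubmodule (n : ℕ) : Submodule ℝ (Matrix (Fin n) (Fin n) ℝ) where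
  carrier := {A | A.IsSymm}
  add_mem' := fun {A B} hA hB => by
    simp only [Set.mem_setOf_eq, Matrix.IsSymm, Matrix.transpose_add] at *
    rw [hA, hB]
  zero_mem' := by simp [Matrix.IsSymm]
  smul_mem' := fun c A hA => by
    simp only [Set.mem_setOf_eq, Matrix.IsSymm, Matrix.transpose_smul] at *
    rw [hA]

/-- Index set for pairs `1 ≤ i ≤ j ≤ n`. -/
abbrev SymIdx (n : ℕ) := {p : Fin n × Fin n // p.1 ≤ p.2}


-- quadratic expansion helper
lemma quad_expand {n : ℕ} (N : Matrix (Fin n) (Fin n) ℝ) (hsym : Nᵀ = N)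
    (x w : Fin n → ℝ) (t : ℝ) :
    (x + t • w) ⬝ᵥ N *ᵥ (x + t • w)
      = x ⬝ᵥ N *ᵥ x + 2*t*(w ⬝ᵥ N *ᵥ x) + t^2 * (w ⬝ᵥ N *ᵥ w) := by
  have hswap : x ⬝ᵥ N *ᵥ w = w ⬝ᵥ N *ᵥ x := by
    rw [Matrix.dotProduct_mulVec, ← Matrix.mulVec_transpose, hsym, dotProduct_comm]
  rw [Matrix.mulVec_add, Matrix.mulVec_smul, dotProduct_add, add_dotProduct, add_dotProduct,
    dotProduct_smul, smul_dotProduct, smul_dotProduct, dotProduct_smul, hswap]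
  simp only [smul_eq_mul]
  ring

/-- Key lemma: a symmetric PSD Z-matrix supported on S admits d > 0 with N d ≥ 0. -/
lemma psdZ_scaling {n : ℕ} (S : Finset (Fin n)) :
    ∀ N : Matrix (Fin n) (Fin n) ℝ, Nᵀ = N →
    (∀ x : Fin n → ℝ, 0 ≤ x ⬝ᵥ N *ᵥ x) →
    (∀ i j, i ≠ j → N i j ≤ 0) →
    (∀ i j, i ∉ S ∨ j ∉ S → N i j = 0) →
    ∃ d : Fin n → ℝ, (∀ i, 0 < d i) ∧ ∀ i, 0 ≤ (N *ᵥ d) i := by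
  induction S using Finset.strongInduction with
  | _ S ih =>
  intro N hsym hpsd hz hsupp
  rcases S.eq_empty_or_nonempty with rfl | hSne
  · refine ⟨fun _ => 1, fun _ => one_pos, fun i => ?_⟩
    have : ∀ j, N i j = 0 := fun j => hsupp i j (Or.inl (Finset.notMem_empty i))
    simp [Matrix.mulVec, dotProduct, this]
  -- the simplex
  set Δ : Set (Fin n → ℝ) :=
    {x | (∀ i, 0 ≤ x i) ∧ (∀ i, i ∉ S → x i = 0) ∧ ∑ i, x i = 1} with hΔ
  have hΔne : Δ.Nonempty := by
    obtain ⟨i0, hi0⟩ := hSne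
    refine ⟨Pi.single i0 1, fun i => ?_, fun i hi => ?_, by simp⟩
    · rw [Pi.single_apply]; split <;> norm_num
    · rw [Pi.single_apply]
      have : i ≠ i0 := fun h => hi (h ▸ hi0)
      simp [this]
  have hΔsub : Δ ⊆ Set.Icc (0 : Fin n → ℝ) 1 := by
    rintro x ⟨hx0, _, hx1⟩
    refine ⟨fun i => hx0 i, fun i => ?_⟩
    calc x i ≤ ∑ j, x j := Finset.single_le_sum (fun j _ => hx0 j) (Finset.mem_univ i)
    _ = 1 := hx1
  have hΔclosed : IsClosed Δ := by
    have h1 : IsClosed {x : Fin n → ℝ | ∀ i, 0 ≤ x i} := by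
      have : {x : Fin n → ℝ | ∀ i, 0 ≤ x i} = ⋂ i, {x | 0 ≤ x i} := by
        ext x; simp
      rw [this]
      exact isClosed_iInter fun i => isClosed_le continuous_const (continuous_apply i)
    have h2 : IsClosed {x : Fin n → ℝ | ∀ i, i ∉ S → x i = 0} := by
      have : {x : Fin n → ℝ | ∀ i, i ∉ S → x i = 0}
          = ⋂ i, ⋂ (_ : i ∉ S), {x | x i = 0} := by ext x; simp
      rw [this]
      exact isClosed_iInter fun i => isClosed_iInter fun _ =>
        isClosed_eq (continuous_apply i) continuous_const
    have h3 : IsClosed {x : Fin n → ℝ | ∑ i, x i = 1} :=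
      isClosed_eq (by fun_prop) continuous_const
    have : Δ = {x : Fin n → ℝ | ∀ i, 0 ≤ x i} ∩
        ({x | ∀ i, i ∉ S → x i = 0} ∩ {x | ∑ i, x i = 1}) := by
      ext x; simp only [hΔ, Set.mem_setOf_eq, Set.mem_inter_iff]
    rw [this]
    exact h1.inter (h2.inter h3)
  have hΔcomp : IsCompact Δ := isCompact_Icc.of_isClosed_subset hΔclosed hΔsub
  have hqcont : Continuous (fun x : Fin n → ℝ => x ⬝ᵥ N *ᵥ x) := by
    unfold dotProduct Matrix.mulVec dotProduct; dsimp; fun_prop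
  obtain ⟨x, hxΔ, hxmin⟩ := hΔcomp.exists_isMinOn hΔne hqcont.continuousOn
  obtain ⟨hx0, hxsupp, hxsum⟩ := hxΔ
  have hmin : ∀ y ∈ Δ, x ⬝ᵥ N *ᵥ x ≤ y ⬝ᵥ N *ᵥ y := fun y hy => hxmin hy
  -- KKT step
  have kkt : ∀ i j, 0 < x i → j ∈ S → (N *ᵥ x) i ≤ (N *ᵥ x) j := by
    intro i j hxi hjS
    rcases eq_or_ne j i with rfl | hji
    · exact le_refl _
    by_contra hB'
    push_neg at hB'
    set w : Fin n → ℝ := Pi.single j 1 - Pi.single i 1 with hw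
    have hwNx : w ⬝ᵥ N *ᵥ x = (N *ᵥ x) j - (N *ᵥ x) i := by
      simp [hw, sub_dotProduct]
    set B := w ⬝ᵥ N *ᵥ x with hBdef
    have hB : B < 0 := by rw [hwNx]; linarith
    set R := w ⬝ᵥ N *ᵥ w with hR
    have hiS : i ∈ S := by
      by_contra hiS
      exact absurd (hxsupp i hiS) (by linarith)
    set t : ℝ := if R ≤ 0 then x i else min (x i) (-B/R) with ht
    have htpos : 0 < t := by
      rw [ht]; split
      · exact hxi
      · exact lt_min hxi (div_pos (by linarith) (by linarith [not_le.mp ‹¬ R ≤ 0›]))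
    have htle : t ≤ x i := by
      rw [ht]; split
      · exact le_refl _
      · exact min_le_left _ _
    have hfeas : x + t • w ∈ Δ := by
      refine ⟨fun p => ?_, fun p hp => ?_, ?_⟩
      · simp only [Pi.add_apply, Pi.smul_apply, hw, Pi.sub_apply, smul_eq_mul]
        rw [Pi.single_apply, Pi.single_apply]
        have hxp := hx0 p
        split_ifs with h1 h2 h3
        · exact absurd (h1.symm.trans h2) hji
        · nlinarith
        · have h4 : t ≤ x p := by rw [h3]; exact htle
          linarith
        · linarith
      · simp only [Pi.add_apply, Pi.smul_apply, hw, Pi.sub_apply, smul_eq_mul]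
        have hpi : p ≠ i := fun h => hp (h ▸ hiS)
        have hpj : p ≠ j := fun h => hp (h ▸ hjS)
        rw [Pi.single_apply, Pi.single_apply]
        simp only [if_neg hpi, if_neg hpj, hxsupp p hp]
        ring
      · have hsum1 : ∀ r : Fin n, ∑ p, Pi.single r (1:ℝ) p = 1 := fun r =>
          Fintype.sum_pi_single' r 1
        have : ∑ p, (x + t • w) p = (∑ p, x p) + t * ((∑ p, Pi.single j (1:ℝ) p) - ∑ p, Pi.single i (1:ℝ) p) := by
          simp [hw, Finset.sum_add_distrib, Finset.mul_sum, Finset.sum_sub_distrib, mul_sub]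
          rw [← Finset.mul_sum, ← Finset.mul_sum, hsum1, hsum1]
          ring
        rw [this, hxsum, hsum1, hsum1]
        ring
    have hgrow := hmin _ hfeas
    rw [quad_expand N hsym x w t] at hgrow
    have hcontra : 2*t*B + t^2*R < 0 := by
      rcases le_or_gt R 0 with hR0 | hR0
      · nlinarith
      · have htR : t * R ≤ -B := by
          have : t ≤ -B/R := by rw [ht, if_neg (not_le.mpr hR0)]; exact min_le_right _ _
          calc t * R ≤ (-B/R) * R := by nlinarith
          _ = -B := by field_simp
        nlinarith
    rw [← hBdef, ← hR] at hgrow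
    linarith
  -- consequences of KKT
  have hNsymm : ∀ a b, N a b = N b a := fun a b => by conv_lhs => rw [← hsym, Matrix.transpose_apply]
  have hxS : ∀ i, 0 < x i → i ∈ S := by
    intro i hxi; by_contra h; rw [hxsupp i h] at hxi; exact lt_irrefl 0 hxi
  obtain ⟨i0, hi0pos⟩ : ∃ i, 0 < x i := by
    by_contra h; push_neg at h
    have hz0 : ∀ i ∈ Finset.univ, x i = 0 := fun i _ => le_antisymm (h i) (hx0 i)
    rw [Finset.sum_congr rfl hz0] at hxsum; simp at hxsum
  set μ := (N *ᵥ x) i0 with hμ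
  have heq : ∀ i, 0 < x i → (N *ᵥ x) i = μ := fun i hi =>
    le_antisymm (kkt i i0 hi (hxS i0 hi0pos)) (kkt i0 i hi0pos (hxS i hi))
  have hμ0 : 0 ≤ μ := by
    have hq : x ⬝ᵥ N *ᵥ x = ∑ i, x i * (N *ᵥ x) i := rfl
    have h1 : x ⬝ᵥ N *ᵥ x = ∑ i, x i * μ := by
      rw [hq]; apply Finset.sum_congr rfl; intro i _
      rcases (hx0 i).lt_or_eq with hlt | heq0
      · rw [heq i hlt]
      · rw [← heq0]; ring
    have h2 : x ⬝ᵥ N *ᵥ x = μ := by rw [h1, ← Finset.sum_mul, hxsum, one_mul]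
    rw [← h2]; exact hpsd x
  have hNx0 : ∀ j, 0 ≤ (N *ᵥ x) j := by
    intro j
    by_cases hjS : j ∈ S
    · exact le_trans hμ0 (kkt i0 j hi0pos hjS)
    · have hrow : ∀ p, N j p = 0 := fun p => hsupp j p (Or.inl hjS)
      have : (N *ᵥ x) j = 0 := by simp [Matrix.mulVec, dotProduct, hrow]
      rw [this]
  by_cases hTS : ∀ i ∈ S, 0 < x i
  · -- all of S in support: done
    refine ⟨fun i => if i ∈ S then x i else 1, fun i => ?_, fun i => ?_⟩
    · dsimp only; split
      · exact hTS i ‹_›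
      · exact one_pos
    · have hrw : (N *ᵥ fun i => if i ∈ S then x i else 1) i = (N *ᵥ x) i := by
        simp only [Matrix.mulVec, dotProduct]
        apply Finset.sum_congr rfl; intro j _
        by_cases hjS : j ∈ S
        · rw [if_pos hjS]
        · rw [if_neg hjS, hsupp i j (Or.inr hjS), hxsupp j hjS]; ring
      rw [hrw]; exact hNx0 i
  · push_neg at hTS
    -- zero pattern between support and the rest
    have hzero : ∀ j, j ∈ S → x j = 0 → ∀ i, 0 < x i → N j i = 0 := by
      intro j hjS hxj
      have h1 : (N *ᵥ x) j = ∑ p, N j p * x p := rfl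
      have h2 : ∀ p ∈ Finset.univ, N j p * x p ≤ 0 := by
        intro p _
        rcases (hx0 p).lt_or_eq with hlt | heq0
        · have hpj : p ≠ j := by rintro rfl; rw [hxj] at hlt; exact lt_irrefl 0 hlt
          have hzz := hz j p (Ne.symm hpj)
          nlinarith
        · rw [← heq0]; ring_nf; exact le_refl 0
      have hsum0 : ∑ p, N j p * x p = 0 := by
        have hle : ∑ p, N j p * x p ≤ 0 := Finset.sum_nonpos h2
        have hge : 0 ≤ ∑ p, N j p * x p := by rw [← h1]; exact hNx0 j
        linarith
      have hall := (Finset.sum_eq_zero_iff_of_nonpos h2).mp hsum0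
      intro i hi
      rcases mul_eq_zero.mp (hall i (Finset.mem_univ i)) with h | h
      · exact h
      · rw [h] at hi; exact absurd hi (lt_irrefl 0)
    set S' := S.filter (fun i => ¬ 0 < x i) with hS'def
    have hS'mem : ∀ i, i ∈ S' ↔ i ∈ S ∧ ¬ 0 < x i := by
      intro i; rw [hS'def, Finset.mem_filter]
    have hS'sub : S' ⊂ S := by
      rw [hS'def]
      refine Finset.filter_ssubset.mpr ⟨i0, hxS i0 hi0pos, ?_⟩
      exact fun h => h hi0pos
    set N' : Matrix (Fin n) (Fin n) ℝ :=
      Matrix.of (fun i j => if i ∈ S' ∧ j ∈ S' then N i j else 0) with hN'def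
    have hN'app : ∀ i j, N' i j = if i ∈ S' ∧ j ∈ S' then N i j else 0 := fun i j => rfl
    have hsym' : N'ᵀ = N' := by
      ext i j
      rw [Matrix.transpose_apply, hN'app, hN'app]
      by_cases h1 : i ∈ S' <;> by_cases h2 : j ∈ S' <;>
        simp [h1, h2, hNsymm i j]
    have hpsd' : ∀ v : Fin n → ℝ, 0 ≤ v ⬝ᵥ N' *ᵥ v := by
      intro v
      set y : Fin n → ℝ := fun p => if p ∈ S' then v p else 0 with hy
      have hvy : v ⬝ᵥ N' *ᵥ v = y ⬝ᵥ N *ᵥ y := by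
        simp only [dotProduct, Matrix.mulVec]
        apply Finset.sum_congr rfl; intro i _
        by_cases hiS' : i ∈ S'
        · have : y i = v i := by rw [hy]; simp [hiS']
          rw [this]
          congr 1
          apply Finset.sum_congr rfl; intro j _
          by_cases hjS' : j ∈ S'
          · have : y j = v j := by rw [hy]; simp [hjS']
            rw [this, hN'app, if_pos ⟨hiS', hjS'⟩]
          · have : y j = 0 := by rw [hy]; simp [hjS']
            rw [this, hN'app, if_neg (fun hc => hjS' hc.2)]; ring
        · have hyi : y i = 0 := by rw [hy]; simp [hiS']
          rw [hyi]
          have : ∀ j, N' i j = 0 := fun j => by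
            rw [hN'app, if_neg (fun hc => hiS' hc.1)]
          simp [this]
      rw [hvy]; exact hpsd y
    have hz' : ∀ i j, i ≠ j → N' i j ≤ 0 := by
      intro i j hij
      rw [hN'app]; split
      · exact hz i j hij
      · exact le_refl 0
    have hsupp' : ∀ i j, i ∉ S' ∨ j ∉ S' → N' i j = 0 := by
      intro i j h
      rw [hN'app, if_neg (fun hc => by rcases h with h | h; exacts [h hc.1, h hc.2])]
    obtain ⟨d', hd'pos, hd'⟩ := ih S' hS'sub N' hsym' hpsd' hz' hsupp'
    refine ⟨fun i => if 0 < x i then x i else d' i, fun i => ?_, fun i => ?_⟩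
    · dsimp only; split
      · assumption
      · exact hd'pos i
    · by_cases hxi : 0 < x i
      · have hrw : (N *ᵥ fun j => if 0 < x j then x j else d' j) i = (N *ᵥ x) i := by
          simp only [Matrix.mulVec, dotProduct]
          apply Finset.sum_congr rfl; intro j _
          by_cases hxj : 0 < x j
          · rw [if_pos hxj]
          · rw [if_neg hxj]
            have hxj0 : x j = 0 := le_antisymm (not_lt.mp hxj) (hx0 j)
            have hNij : N i j = 0 := by
              by_cases hjS : j ∈ S
              · rw [hNsymm i j]; exact hzero j hjS hxj0 i hxi
              · exact hsupp i j (Or.inr hjS)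
            rw [hNij, hxj0]; ring
        rw [hrw]; exact hNx0 i
      · by_cases hiS : i ∈ S
        · have hiS' : i ∈ S' := (hS'mem i).mpr ⟨hiS, hxi⟩
          have hxi0 : x i = 0 := le_antisymm (not_lt.mp hxi) (hx0 i)
          have hrw : (N *ᵥ fun j => if 0 < x j then x j else d' j) i = (N' *ᵥ d') i := by
            simp only [Matrix.mulVec, dotProduct]
            apply Finset.sum_congr rfl; intro j _
            by_cases hxj : 0 < x j
            · rw [if_pos hxj]
              have hNij : N i j = 0 := hzero i hiS hxi0 j hxj
              have hN'ij : N' i j = 0 := by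
                rw [hN'app, if_neg]
                rintro ⟨-, hjS'⟩
                exact ((hS'mem j).mp hjS').2 hxj
              rw [hNij, hN'ij]; ring
            · rw [if_neg hxj]
              by_cases hjS : j ∈ S
              · have hjS' : j ∈ S' := (hS'mem j).mpr ⟨hjS, hxj⟩
                rw [hN'app, if_pos ⟨hiS', hjS'⟩]
              · have hjS' : j ∉ S' := fun hc => hjS ((hS'mem j).mp hc).1
                rw [hsupp i j (Or.inr hjS), hN'app, if_neg (fun hc => hjS' hc.2)]
          rw [hrw]; exact hd' i
        · have hrow : ∀ p, N i p = 0 := fun p => hsupp i p (Or.inl hiS)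
          have : (N *ᵥ fun j => if 0 < x j then x j else d' j) i = 0 := by
            simp [Matrix.mulVec, dotProduct, hrow]
          rw [this]


section Aux

variable {n : ℕ}

lemma e_apply (i p : Fin n) : e i p = if p = i then 1 else 0 := by
  rw [e, Pi.single_apply]

lemma Bbar_apply (α : ℝ) (i j p q : Fin n) :
    Bbar α i j p q =
      ((if p = i then (1:ℝ) else 0) + α * (if p = j then 1 else 0)) *
      ((if q = i then (1:ℝ) else 0) + α * (if q = j then 1 else 0)) := by
  simp [Bbar, Matrix.vecMulVec_apply, e_apply, Pi.add_apply, Pi.smul_apply, smul_eq_mul]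

lemma sq_one_mul_mul {α a b : ℝ} (h : α * α = 1) : (α * a) * (α * b) = a * b := by
  linear_combination a * b * h

lemma Bbar_swap {α : ℝ} (hα : α * α = 1) (i j : Fin n) : Bbar α i j = Bbar α j i := by
  ext p q
  rw [Bbar_apply, Bbar_apply]
  have key : ∀ r : Fin n, (if r = j then (1:ℝ) else 0) + α * (if r = i then 1 else 0)
      = α * ((if r = i then (1:ℝ) else 0) + α * (if r = j then 1 else 0)) := by
    intro r
    split_ifs
    · linear_combination -hα
    · linear_combination -hα
    · ring
    · ring
  rw [key p, key q, sq_one_mul_mul hα]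

lemma vecMulVec_isSymm (u : Fin n → ℝ) : (vecMulVec u u)ᵀ = vecMulVec u u := by
  ext p q
  rw [Matrix.transpose_apply, Matrix.vecMulVec_apply, Matrix.vecMulVec_apply]
  ring

lemma vecMulVec_mulVec (u v x : Fin n → ℝ) : (vecMulVec u v) *ᵥ x = (v ⬝ᵥ x) • u := by
  ext p
  simp only [Matrix.mulVec, dotProduct, Matrix.vecMulVec_apply, Pi.smul_apply,
    smul_eq_mul]
  rw [Finset.sum_mul]
  apply Finset.sum_congr rfl
  intro q _
  ring

/-- The comparison vector: for `i ≠ j` it is `e i - |α| e j`. -/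
def compVec (α : ℝ) (i j : Fin n) : Fin n → ℝ :=
  if i = j then (1 + α) • e i else e i - |α| • e j

lemma compVec_apply_eq (α : ℝ) (i p : Fin n) :
    compVec α i i p = (1 + α) * (if p = i then 1 else 0) := by
  rw [compVec, if_pos rfl]
  simp [e_apply, Pi.smul_apply, smul_eq_mul]

lemma compVec_apply_ne (α : ℝ) {i j : Fin n} (hij : i ≠ j) (p : Fin n) :
    compVec α i j p = (if p = i then (1:ℝ) else 0) - |α| * (if p = j then 1 else 0) := by
  rw [compVec, if_neg hij]
  simp [e_apply, Pi.smul_apply, Pi.sub_apply, smul_eq_mul]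

lemma compVec_diag (α : ℝ) (i j p : Fin n) :
    compVec α i j p * compVec α i j p = Bbar α i j p p := by
  by_cases hij : i = j
  · subst hij
    rw [compVec_apply_eq, Bbar_apply]
    by_cases hpi : p = i
    · rw [if_pos hpi]; ring
    · rw [if_neg hpi]; ring
  · rw [compVec_apply_ne α hij, Bbar_apply]
    by_cases hpi : p = i <;> by_cases hpj : p = j
    · exact absurd (hpi.symm.trans hpj) hij
    · rw [if_pos hpi, if_neg hpj]; ring
    · rw [if_neg hpi, if_pos hpj]
      linear_combination abs_mul_abs_self α
    · rw [if_neg hpi, if_neg hpj]; ring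

lemma compVec_off (α : ℝ) (i j p q : Fin n) (hpq : p ≠ q) :
    compVec α i j p * compVec α i j q = -|Bbar α i j p q| := by
  by_cases hij : i = j
  · subst hij
    rw [compVec_apply_eq, compVec_apply_eq, Bbar_apply]
    by_cases hpi : p = i <;> by_cases hqi : q = i
    · exact absurd (hpi.trans hqi.symm) hpq
    · rw [if_pos hpi, if_neg hqi]; simp
    · rw [if_neg hpi, if_pos hqi]; simp
    · rw [if_neg hpi, if_neg hqi]; simp
  · rw [compVec_apply_ne α hij, compVec_apply_ne α hij, Bbar_apply]
    by_cases hpi : p = i <;> by_cases hpj : p = j <;> by_cases hqi : q = i <;>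
      by_cases hqj : q = j
    · exact absurd (hpi.symm.trans hpj) hij
    · exact absurd (hpi.symm.trans hpj) hij
    · exact absurd (hpi.symm.trans hpj) hij
    · exact absurd (hpi.symm.trans hpj) hij
    · exact absurd (hpi.trans hqi.symm) hpq
    · exact absurd (hpi.trans hqi.symm) hpq
    · rw [if_pos hpi, if_neg hpj, if_neg hqi, if_pos hqj]; simp [abs_mul]
    · rw [if_pos hpi, if_neg hpj, if_neg hqi, if_neg hqj]; simp
    · exact absurd (hqi.symm.trans hqj) hij
    · rw [if_neg hpi, if_pos hpj, if_pos hqi, if_neg hqj]; simp [abs_mul]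
    · exact absurd (hpj.trans hqj.symm) hpq
    · rw [if_neg hpi, if_pos hpj, if_neg hqi, if_neg hqj]; simp
    · exact absurd (hqi.symm.trans hqj) hij
    · rw [if_neg hpi, if_neg hpj, if_pos hqi, if_neg hqj]; simp
    · rw [if_neg hpi, if_neg hpj, if_neg hqi, if_pos hqj]; simp
    · rw [if_neg hpi, if_neg hpj, if_neg hqi, if_neg hqj]; simp

lemma matrix_sum_mulVec {k : ℕ} (f : Fin k → Matrix (Fin n) (Fin n) ℝ) (v : Fin n → ℝ) :
    (∑ t, f t) *ᵥ v = ∑ t, f t *ᵥ v := by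
  ext p
  rw [Finset.sum_apply]
  simp only [Matrix.mulVec, dotProduct, Matrix.sum_apply]
  calc ∑ q, (∑ t, f t p q) * v q = ∑ q, ∑ t, f t p q * v q := by
        apply Finset.sum_congr rfl; intros; rw [Finset.sum_mul]
    _ = ∑ t, ∑ q, f t p q * v q := Finset.sum_comm

lemma dotProduct_finsum {k : ℕ} (v : Fin n → ℝ) (g : Fin k → Fin n → ℝ) :
    v ⬝ᵥ (∑ t, g t) = ∑ t, v ⬝ᵥ g t := by
  simp only [dotProduct, Finset.sum_apply]
  calc ∑ q, v q * ∑ t, g t q = ∑ q, ∑ t, v q * g t q := by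
        apply Finset.sum_congr rfl; intros; rw [Finset.mul_sum]
    _ = ∑ t, ∑ q, v q * g t q := Finset.sum_comm

/-- Sign and coefficient data for the decomposition of a DD matrix. -/
def ddAlpha (A : Matrix (Fin n) (Fin n) ℝ) (i j : Fin n) : ℝ :=
  if i = j then 1 else if 0 ≤ A i j then 1 else -1

def ddCoef (A : Matrix (Fin n) (Fin n) ℝ) (i j : Fin n) : ℝ :=
  if i = j then (A i i - ∑ t ∈ Finset.univ.erase i, |A i t|) / 4 else |A i j| / 2

lemma ddAlpha_cases (A : Matrix (Fin n) (Fin n) ℝ) (i j : Fin n) :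
    ddAlpha A i j = 1 ∨ ddAlpha A i j = -1 := by
  rw [ddAlpha]; split_ifs <;> simp

lemma ddAlpha_sq (A : Matrix (Fin n) (Fin n) ℝ) (i j : Fin n) :
    ddAlpha A i j * ddAlpha A i j = 1 := by
  rcases ddAlpha_cases A i j with h | h <;> rw [h] <;> norm_num

lemma ddAlpha_diag (A : Matrix (Fin n) (Fin n) ℝ) (i : Fin n) : ddAlpha A i i = 1 := by
  rw [ddAlpha, if_pos rfl]

lemma ddAlpha_mul_abs (A : Matrix (Fin n) (Fin n) ℝ) {i j : Fin n} (hij : i ≠ j) :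
    ddAlpha A i j * |A i j| = A i j := by
  rw [ddAlpha, if_neg hij]
  split_ifs with h
  · rw [one_mul, abs_of_nonneg h]
  · rw [abs_of_neg (lt_of_not_ge h)]; ring

lemma dd_decomp (A : Matrix (Fin n) (Fin n) ℝ) (hAs : ∀ a b, A a b = A b a) :
    A = ∑ z : Fin n × Fin n, ddCoef A z.1 z.2 • Bbar (ddAlpha A z.1 z.2) z.1 z.2 := by
  ext p q
  rw [Matrix.sum_apply, Fintype.sum_prod_type]
  simp only [Matrix.smul_apply, smul_eq_mul]
  by_cases hpq : p = q
  · subst hpq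
    have inner_p : ∑ j, ddCoef A p j * Bbar (ddAlpha A p j) p j p p
        = ddCoef A p p * 4 + ∑ j ∈ Finset.univ.erase p, |A p j| / 2 := by
      rw [← Finset.add_sum_erase _ _ (Finset.mem_univ p)]
      congr 1
      · rw [Bbar_apply, ddAlpha_diag, if_pos rfl]
        norm_num
      · apply Finset.sum_congr rfl
        intro j hj
        have hjp : j ≠ p := Finset.ne_of_mem_erase hj
        rw [Bbar_apply, ddCoef, if_neg hjp.symm, if_pos rfl, if_neg hjp.symm]
        ring
    have inner_ne : ∀ i, i ≠ p → ∑ j, ddCoef A i j * Bbar (ddAlpha A i j) i j p p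
        = |A i p| / 2 := by
      intro i hip
      rw [Finset.sum_eq_single p]
      · rw [Bbar_apply, ddCoef, if_neg hip, if_neg (Ne.symm hip), if_pos rfl]
        linear_combination (|A i p| / 2) * (ddAlpha_sq A i p)
      · intro b _ hbp
        rw [Bbar_apply, if_neg (Ne.symm hip), if_neg (Ne.symm hbp)]
        ring
      · intro h; exact absurd (Finset.mem_univ p) h
    rw [← Finset.add_sum_erase _ _ (Finset.mem_univ p), inner_p,
      Finset.sum_congr rfl (fun i hi => inner_ne i (Finset.ne_of_mem_erase hi)),
      Finset.sum_congr rfl (fun i (hi : i ∈ Finset.univ.erase p) =>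
        (by rw [hAs] : |A i p| / 2 = |A p i| / 2)),
      ddCoef, if_pos rfl]
    rw [← Finset.sum_div]
    ring
  · have hqp : q ≠ p := Ne.symm hpq
    have inner_pp : ∑ j, ddCoef A p j * Bbar (ddAlpha A p j) p j p q = A p q / 2 := by
      rw [Finset.sum_eq_single q]
      · rw [Bbar_apply, ddCoef, if_neg hpq, if_pos rfl, if_neg hpq, if_neg hqp, if_pos rfl]
        linear_combination (1/2) * ddAlpha_mul_abs A hpq
      · intro b _ hbq
        rw [Bbar_apply, if_neg hqp, if_neg (Ne.symm hbq)]
        ring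
      · intro h; exact absurd (Finset.mem_univ q) h
    have inner_qq : ∑ j, ddCoef A q j * Bbar (ddAlpha A q j) q j p q = A p q / 2 := by
      rw [Finset.sum_eq_single p]
      · rw [Bbar_apply, ddCoef, if_neg hqp, if_neg hpq, if_pos rfl, if_pos rfl, if_neg hqp]
        have h1 : ddAlpha A q p * |A q p| = A q p := ddAlpha_mul_abs A hqp
        have h2 : A q p = A p q := hAs q p
        linear_combination (1/2) * h1 + (1/2) * h2
      · intro b _ hbp
        rw [Bbar_apply, if_neg hpq, if_neg (Ne.symm hbp)]
        ring
      · intro h; exact absurd (Finset.mem_univ p) h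
    have inner_z : ∀ i, i ≠ p → i ≠ q →
        ∑ j, ddCoef A i j * Bbar (ddAlpha A i j) i j p q = 0 := by
      intro i hip hiq
      apply Finset.sum_eq_zero
      intro j _
      rw [Bbar_apply, if_neg (Ne.symm hip), if_neg (Ne.symm hiq)]
      by_cases h1 : p = j
      · have h2 : ¬ q = j := fun hc => hpq (h1.trans hc.symm)
        rw [if_neg h2]; ring
      · rw [if_neg h1]; ring
    have hqmem : q ∈ Finset.univ.erase p := Finset.mem_erase.mpr ⟨hqp, Finset.mem_univ q⟩
    rw [← Finset.add_sum_erase _ _ (Finset.mem_univ p), inner_pp,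
      ← Finset.add_sum_erase _ _ hqmem, inner_qq,
      Finset.sum_eq_zero (fun i hi => inner_z i
        (Finset.ne_of_mem_erase (Finset.mem_of_mem_erase hi))
        (Finset.ne_of_mem_erase hi))]
    ring

end Aux



/-- for any parameter set `H` containing `1` and `-1`,
`DD_n ⊆ cone(⋃_{α ∈ H} B̄(α)) ⊆ SDD_n`. -/
theorem stmt14 (n : ℕ) (hn : 0 < n) (H : Set ℝ) (h1 : (1 : ℝ) ∈ H)
    (h2 : (-1 : ℝ) ∈ H) :
    DD n ⊆ coneHull (⋃ α ∈ H, BbarSet n α) ∧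
    coneHull (⋃ α ∈ H, BbarSet n α) ⊆ SDD n := by
  constructor
  · -- DD ⊆ coneHull
    intro A hA
    obtain ⟨hAsym, hdd⟩ := hA
    have hAs : ∀ a b, A a b = A b a := fun a b => by
      conv_lhs => rw [← hAsym, Matrix.transpose_apply]
    refine ⟨n * n,
      fun t => ddCoef A (finProdFinEquiv.symm t).1 (finProdFinEquiv.symm t).2,
      fun t => Bbar (ddAlpha A (finProdFinEquiv.symm t).1 (finProdFinEquiv.symm t).2)
        (finProdFinEquiv.symm t).1 (finProdFinEquiv.symm t).2, ?_, ?_, ?_⟩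
    · intro t
      set a := (finProdFinEquiv.symm t).1
      set b := (finProdFinEquiv.symm t).2
      simp only [ddCoef]
      split_ifs with hab
      · have := hdd a
        linarith
      · positivity
    · intro t
      set a := (finProdFinEquiv.symm t).1
      set b := (finProdFinEquiv.symm t).2
      have hsq : ddAlpha A a b * ddAlpha A a b = 1 := ddAlpha_sq A a b
      have hBB : Bbar (ddAlpha A a b) a b ∈ BbarSet n (ddAlpha A a b) := by
        rcases le_total a b with hle | hle
        · exact ⟨a, b, hle, rfl⟩
        · exact ⟨b, a, hle, Bbar_swap hsq a b⟩
      have hmem : ddAlpha A a b ∈ H := by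
        rcases ddAlpha_cases A a b with h | h <;> rw [h]
        · exact h1
        · exact h2
      exact Set.mem_biUnion hmem hBB
    · refine (dd_decomp A hAs).trans ?_
      exact (Equiv.sum_comp (finProdFinEquiv.symm : Fin (n*n) ≃ Fin n × Fin n)
        (fun z : Fin n × Fin n => ddCoef A z.1 z.2 • Bbar (ddAlpha A z.1 z.2) z.1 z.2)).symm
  · -- coneHull ⊆ SDD
    intro X hX
    obtain ⟨k, c, M, hc, hM, hXsum⟩ := hX
    have hrep : ∀ t : Fin k, ∃ α : ℝ, ∃ i : Fin n, ∃ j : Fin n, M t = Bbar α i j := by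
      intro t
      obtain ⟨α, -, i, j, -, hBB⟩ := Set.mem_iUnion₂.mp (hM t)
      exact ⟨α, i, j, hBB⟩
    choose αt it jt hMt using hrep
    set C : Matrix (Fin n) (Fin n) ℝ :=
      ∑ t, c t • vecMulVec (compVec (αt t) (it t) (jt t)) (compVec (αt t) (it t) (jt t))
      with hC
    have hCapp : ∀ p q, C p q = ∑ t, c t * (compVec (αt t) (it t) (jt t) p *
        compVec (αt t) (it t) (jt t) q) := by
      intro p q
      rw [hC, Matrix.sum_apply]
      apply Finset.sum_congr rfl
      intro t _
      rw [Matrix.smul_apply, Matrix.vecMulVec_apply, smul_eq_mul]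
    have hXapp : ∀ p q, X p q = ∑ t, c t * Bbar (αt t) (it t) (jt t) p q := by
      intro p q
      rw [hXsum, Matrix.sum_apply]
      apply Finset.sum_congr rfl
      intro t _
      rw [Matrix.smul_apply, hMt t, smul_eq_mul]
    have hCdiag : ∀ p, C p p = X p p := by
      intro p
      rw [hCapp, hXapp]
      apply Finset.sum_congr rfl
      intro t _
      rw [compVec_diag]
    have hCoffle : ∀ p q, p ≠ q → C p q ≤ -|X p q| := by
      intro p q hpq
      rw [hCapp, hXapp]
      have h1 : ∀ t ∈ Finset.univ, c t * (compVec (αt t) (it t) (jt t) p *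
          compVec (αt t) (it t) (jt t) q) = -(c t * |Bbar (αt t) (it t) (jt t) p q|) := by
        intro t _
        rw [compVec_off _ _ _ _ _ hpq]
        ring
      rw [Finset.sum_congr rfl h1, Finset.sum_neg_distrib]
      have h2 : |∑ t, c t * Bbar (αt t) (it t) (jt t) p q|
          ≤ ∑ t, c t * |Bbar (αt t) (it t) (jt t) p q| := by
        calc |∑ t, c t * Bbar (αt t) (it t) (jt t) p q|
            ≤ ∑ t, |c t * Bbar (αt t) (it t) (jt t) p q| := Finset.abs_sum_le_sum_abs _ _
          _ = ∑ t, c t * |Bbar (αt t) (it t) (jt t) p q| := by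
              apply Finset.sum_congr rfl
              intro t _
              rw [abs_mul, abs_of_nonneg (hc t)]
      linarith
    have hCsym : Cᵀ = C := by
      rw [hC, Matrix.transpose_sum]
      apply Finset.sum_congr rfl
      intro t _
      rw [Matrix.transpose_smul, vecMulVec_isSymm]
    have hCpsd : ∀ v : Fin n → ℝ, 0 ≤ v ⬝ᵥ C *ᵥ v := by
      intro v
      have hquad : v ⬝ᵥ C *ᵥ v = ∑ t, c t * ((compVec (αt t) (it t) (jt t) ⬝ᵥ v) *
          (compVec (αt t) (it t) (jt t) ⬝ᵥ v)) := by
        rw [hC, matrix_sum_mulVec, dotProduct_finsum]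
        apply Finset.sum_congr rfl
        intro t _
        rw [Matrix.smul_mulVec, vecMulVec_mulVec, dotProduct_smul, dotProduct_smul,
          smul_eq_mul, smul_eq_mul, dotProduct_comm v]
      rw [hquad]
      apply Finset.sum_nonneg
      intro t _
      exact mul_nonneg (hc t) (mul_self_nonneg _)
    have hCz : ∀ a b, a ≠ b → C a b ≤ 0 := fun a b hab =>
      le_trans (hCoffle a b hab) (neg_nonpos.mpr (abs_nonneg _))
    obtain ⟨d, hdpos, hd⟩ := psdZ_scaling Finset.univ C hCsym hCpsd hCz
      (fun a b h => by rcases h with h | h <;> exact absurd (Finset.mem_univ _) h)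
    have hrow : ∀ p, ∑ q ∈ Finset.univ.erase p, |X p q| * d q ≤ X p p * d p := by
      intro p
      have h0 : 0 ≤ (C *ᵥ d) p := hd p
      have h1 : (C *ᵥ d) p = C p p * d p + ∑ q ∈ Finset.univ.erase p, C p q * d q :=
        (Finset.add_sum_erase _ (fun q => C p q * d q) (Finset.mem_univ p)).symm
      have h2 : ∀ q ∈ Finset.univ.erase p, |X p q| * d q ≤ -(C p q * d q) := by
        intro q hq
        have hqp : q ≠ p := Finset.ne_of_mem_erase hq
        have hco := hCoffle p q (Ne.symm hqp)
        have hdq := (hdpos q).le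
        nlinarith
      calc ∑ q ∈ Finset.univ.erase p, |X p q| * d q
          ≤ ∑ q ∈ Finset.univ.erase p, -(C p q * d q) := Finset.sum_le_sum h2
        _ = -(∑ q ∈ Finset.univ.erase p, C p q * d q) := by rw [Finset.sum_neg_distrib]
        _ ≤ C p p * d p := by rw [h1] at h0; linarith
        _ = X p p * d p := by rw [hCdiag]
    have hXsym : X.IsSymm := by
      rw [Matrix.IsSymm, hXsum, Matrix.transpose_sum]
      apply Finset.sum_congr rfl
      intro t _
      rw [Matrix.transpose_smul, hMt t, Bbar, vecMulVec_isSymm]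
    have hXs : ∀ a b, X a b = X b a := fun a b => by
      conv_lhs => rw [← hXsym, Matrix.transpose_apply]
    have hEntry : ∀ p q, (Matrix.diagonal d * X * Matrix.diagonal d) p q
        = d p * X p q * d q := by
      intro p q
      rw [Matrix.mul_diagonal, Matrix.diagonal_mul]
    refine ⟨hXsym, d, hdpos, ?_, ?_⟩
    · rw [Matrix.IsSymm]
      ext p q
      rw [Matrix.transpose_apply, hEntry, hEntry, hXs q p]
      ring
    · intro p
      calc ∑ q ∈ Finset.univ.erase p, |(Matrix.diagonal d * X * Matrix.diagonal d) p q|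
          = ∑ q ∈ Finset.univ.erase p, d p * (|X p q| * d q) := by
            apply Finset.sum_congr rfl
            intro q hq
            rw [hEntry, abs_mul, abs_mul, abs_of_pos (hdpos p), abs_of_pos (hdpos q)]
            ring
        _ = d p * ∑ q ∈ Finset.univ.erase p, |X p q| * d q := (Finset.mul_sum _ _ _).symm
        _ ≤ d p * (X p p * d p) :=
            mul_le_mul_of_nonneg_left (hrow p) (hdpos p).le
        _ = (Matrix.diagonal d * X * Matrix.diagonal d) p p := by rw [hEntry]; ring
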